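/- Let n be a positive integer and let α, β, γ be partitions with at most n rows (weakly decreasing n-tuples of nonnegative integers). The map sending a Littlewood–Richardson skew tableau T of shape γ/α and content β to the array r = (r^i_j), where r^i_j is the number of entries equal to j in row i of T, is a bijection from the set of Littlewood–Richardson skew tableaux of shape γ/α and content β with entries in {1,…,n} onto the set of nonnegative integer solutions of the LR system for (α,β,γ). In particular, the Littlewood–Richardson coefficient c_{α,β}^γ, defined as the number of such tableaux, equals the number of nonnegative integer solutions of the LR system. -/

import Mathlib

/-- A partition with at most `n` rows: a weakly decreasing `n`-tuple of naturals. -/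
def IsPartition (n : ℕ) (α : Fin n → ℕ) : Prop :=
  ∀ i j : Fin n, i ≤ j → α j ≤ α i

/-- The LR system for `(α, β, γ)` in the `n²` rational variables `r i j`
(`r i j` = number of entries equal to `j+1` in row `i+1`, zero-indexed). -/
def IsRatLRSolution (n : ℕ) (α β γ : Fin n → ℕ) (r : Fin n → Fin n → ℚ) : Prop :=
  -- (i) nonnegativity
  (∀ i j : Fin n, 0 ≤ r i j) ∧
  -- (ii) shape constraints
  (∀ i : Fin n, (α i : ℚ) + ∑ j : Fin n, r i j = (γ i : ℚ)) ∧
  -- (iii) content constraints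
  (∀ j : Fin n, ∑ i : Fin n, r i j = (β j : ℚ)) ∧
  -- (iv) tableau constraints
  (∀ (i : Fin n) (h : i.1 + 1 < n) (j : Fin n),
    (α ⟨i.1 + 1, h⟩ : ℚ) + ∑ k ∈ Finset.Iic j, r ⟨i.1 + 1, h⟩ k
      ≤ (α i : ℚ) + ∑ k ∈ Finset.Iio j, r i k) ∧
  -- (v) reverse lattice word constraints
  (∀ i j : Fin n, i < j → r i j = 0) ∧
  (∀ i j : Fin n, 0 < j.1 →
    ∑ i' ∈ Finset.Iic i, r i' j
      ≤ ∑ i' ∈ Finset.Iio i, r i' ⟨j.1 - 1, Nat.lt_of_le_of_lt (Nat.sub_le j.1 1) j.2⟩)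

/-- A nonnegative integer solution of the LR system. -/
def IsNatLRSolution (n : ℕ) (α β γ : Fin n → ℕ) (r : Fin n → Fin n → ℕ) : Prop :=
  IsRatLRSolution n α β γ (fun i j => (r i j : ℚ))

/-- The Littlewood–Richardson coefficient, as the number of nonnegative integer
solutions of the LR system. -/
noncomputable def LRCoeff (n : ℕ) (α β γ : Fin n → ℕ) : ℕ :=
  Set.ncard {r : Fin n → Fin n → ℕ | IsNatLRSolution n α β γ r}

/-- A word `w` (a list of positive naturals) is a reverse lattice word if every
suffix contains, for each `j ≥ 1`, at least as many occurrences of `j` as of `j+1`. -/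
def IsReverseLatticeWord (w : List ℕ) : Prop :=
  ∀ s : List ℕ, s <:+ w → ∀ j : ℕ, 1 ≤ j → s.count (j + 1) ≤ s.count j

/-- A Littlewood–Richardson skew tableau of shape `γ/α` and content `β`, with
entries in `{1, …, n}`.  The cell in row `i+1`, column `c` (for `α i < c ≤ γ i`)
carries the value `entry i c`; entries outside the shape are normalized to `0`. -/
structure LRSkewTableau (n : ℕ) (α β γ : Fin n → ℕ) where
  /-- the shape `γ/α` is defined: `α ⊆ γ` -/
  sub : ∀ i : Fin n, α i ≤ γ i
  /-- `entry i c` is the value in row `i+1`, column `c` -/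
  entry : Fin n → ℕ → ℕ
  /-- entries lie in `{1, …, n}` -/
  entry_pos : ∀ (i : Fin n) (c : ℕ), α i < c → c ≤ γ i → 1 ≤ entry i c
  entry_le : ∀ (i : Fin n) (c : ℕ), α i < c → c ≤ γ i → entry i c ≤ n
  /-- normalization outside the shape -/
  zero_outside : ∀ (i : Fin n) (c : ℕ), c ≤ α i ∨ γ i < c → entry i c = 0
  /-- rows weakly increase left to right -/
  row_weak : ∀ (i : Fin n) (c c' : ℕ), α i < c → c ≤ c' → c' ≤ γ i →
    entry i c ≤ entry i c'
  /-- columns strictly increase downwards -/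
  col_strict : ∀ (i : Fin n) (h : i.1 + 1 < n) (c : ℕ),
    α ⟨i.1 + 1, h⟩ < c → c ≤ γ ⟨i.1 + 1, h⟩ → α i < c → c ≤ γ i →
    entry i c < entry ⟨i.1 + 1, h⟩ c
  /-- content: for each `j ∈ {1, …, n}`, the number of entries equal to `j` is `β j` -/
  content : ∀ j : Fin n,
    (∑ i : Fin n, ((Finset.Ioc (α i) (γ i)).filter (fun c => entry i c = j.1 + 1)).card)
      = β j
  /-- the row word (rows read left to right, bottom row first) is a reverse
  lattice word -/
  lattice : IsReverseLatticeWord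
    (((List.finRange n).reverse).flatMap fun i =>
      (List.range' (α i + 1) (γ i - α i)).map (entry i))

/-- The map sending a LR skew tableau `T` to the array `r`, where `r i j` is the
number of entries equal to `j+1` in row `i+1` of `T`. -/
def tabToR {n : ℕ} {α β γ : Fin n → ℕ} (T : LRSkewTableau n α β γ) :
    Fin n → Fin n → ℕ :=
  fun i j => ((Finset.Ioc (α i) (γ i)).filter (fun c => T.entry i c = j.1 + 1)).card

/-!
Because rows weakly increase, a row of a tableau is determined by its counts: with
`r i j` entries equal to `j + 1` in row `i`, the entry in column `c` is at most `v` exactly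
when `c ≤ α i + r i 0 + ⋯ + r i (v - 1)`. Through this description column strictness between
rows `i` and `i + 1` becomes the tableau inequalities (iv). A suffix of the row word is a
suffix of one row followed by all rows above it, and the worst suffix of row `i` for the
letters `j < j + 1` is the one starting at its first `j + 1`; so the lattice condition
becomes (v). Conversely every solution is realised by filling each row in increasing order.
-/

open Finset

def prefixSum {n : ℕ} (x : Fin n → ℕ) (v : ℕ) : ℕ := ∑ k with k.1 < v, x k

section PrefixSum

variable {n : ℕ} (x : Fin n → ℕ)

lemma prefixSum_mono : Monotone (prefixSum x) :=
  fun _ _ h => sum_le_sum_of_subset fun _ => by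
    simp only [mem_filter, mem_univ, true_and]
    omega

lemma prefixSum_zero : prefixSum x 0 = 0 := by simp [prefixSum]

lemma prefixSum_of_le {v : ℕ} (h : n ≤ v) : prefixSum x v = ∑ k, x k := by
  rw [prefixSum, filter_true_of_mem fun k _ => k.2.trans_le h]

lemma prefixSum_val (j : Fin n) : prefixSum x j = ∑ k ∈ Iio j, x k := by
  rw [prefixSum]
  congr 1
  ext
  simp only [mem_filter, mem_univ, true_and, mem_Iio]
  rfl

lemma prefixSum_val_succ (j : Fin n) : prefixSum x (j + 1) = ∑ k ∈ Iic j, x k := by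
  rw [prefixSum]
  congr 1
  ext
  simp only [mem_filter, mem_univ, true_and, mem_Iic, Fin.le_def]
  omega

lemma prefixSum_val_succ_eq_add (j : Fin n) : prefixSum x (j + 1) = prefixSum x j + x j := by
  rw [prefixSum_val_succ, prefixSum_val, ← Iio_insert, sum_insert (by simp), add_comm]

end PrefixSum

lemma MonotoneOn.apply_le_iff_le_add_card {e : ℕ → ℕ} {a b c : ℕ}
    (he : MonotoneOn e (Set.Ioc a b)) (hc : c ∈ Ioc a b) (v : ℕ) :
    e c ≤ v ↔ c ≤ a + #{c' ∈ Ioc a b | e c' ≤ v} := by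
  have hc' : c ∈ Set.Ioc a b := by simpa using hc
  rw [mem_Ioc] at hc
  constructor
  · intro hcv
    have hsub : Ioc a c ⊆ {c' ∈ Ioc a b | e c' ≤ v} := fun c' h' => by
      simp only [mem_Ioc, mem_filter] at h' ⊢
      exact ⟨⟨h'.1, h'.2.trans hc.2⟩, (he ⟨h'.1, h'.2.trans hc.2⟩ hc' h'.2).trans hcv⟩
    have := card_le_card hsub
    rw [Nat.card_Ioc] at this
    omega
  · intro hcN
    by_contra! hvc
    have hsub : {c' ∈ Ioc a b | e c' ≤ v} ⊆ Ioc a (c - 1) := fun c' h' => by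
      simp only [mem_Ioc, mem_filter] at h' ⊢
      by_contra! hcc'
      have := he hc' ⟨h'.1.1, h'.1.2⟩ (by omega)
      omega
    have := card_le_card hsub
    rw [Nat.card_Ioc] at this
    omega

lemma card_filter_le_eq_prefixSum {ι : Type*} {n : ℕ} {s : Finset ι} {e : ι → ℕ}
    (he : ∀ c ∈ s, e c ∈ Icc 1 n) (v : ℕ) :
    #{c ∈ s | e c ≤ v} = prefixSum (fun j : Fin n => #{c ∈ s | e c = j + 1}) v := by
  have he' : ∀ c ∈ s, 1 ≤ e c ∧ e c ≤ n := fun c hc => mem_Icc.1 (he c hc)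
  rw [card_eq_sum_card_fiberwise (f := fun c => e c - 1)
    (t := ({k : Fin n | k.1 < v} : Finset _).map Fin.valEmbedding), sum_map, prefixSum]
  · refine sum_congr rfl fun k hk => congrArg card ?_
    rw [mem_filter] at hk
    ext c
    simp only [mem_filter, Fin.valEmbedding_apply]
    constructor
    · rintro ⟨⟨hc, -⟩, hck⟩; have := he' c hc; exact ⟨hc, by omega⟩
    · rintro ⟨hc, hck⟩; have := he' c hc; exact ⟨⟨hc, by omega⟩, by omega⟩
  · intro c hc
    simp only [coe_filter, Set.mem_ofPred_eq] at hc
    have := he' c hc.1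
    simp only [coe_map, Fin.valEmbedding_apply, coe_filter, mem_univ, true_and, Set.mem_image,
      Set.mem_ofPred_eq]
    exact ⟨⟨e c - 1, by omega⟩, by simp only; omega, rfl⟩

lemma card_filter_lt_le_iff {B : ℕ → ℕ} (hB : Monotone B) {m c : ℕ} (hc : c ≤ B m) (v : ℕ) :
    #{u ∈ range m | B u < c} ≤ v ↔ c ≤ B v := by
  rcases le_or_gt m v with hmv | hvm
  · exact iff_of_true ((card_filter_le _ _).trans (by simpa using hmv)) (hc.trans (hB hmv))
  constructor
  · intro hcard
    by_contra! hBv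
    have hsub : range (v + 1) ⊆ {u ∈ range m | B u < c} := fun u hu => by
      simp only [mem_range, mem_filter] at hu ⊢
      exact ⟨by omega, (hB (by omega)).trans_lt hBv⟩
    have := card_le_card hsub
    simp only [card_range] at this
    omega
  · intro hcv
    have hsub : {u ∈ range m | B u < c} ⊆ range v := fun u hu => by
      simp only [mem_range, mem_filter] at hu ⊢
      by_contra! hvu
      exact absurd (hB hvu) (by omega)
    simpa using card_le_card hsub

lemma List.count_map_range' (e : ℕ → ℕ) (a b u : ℕ) :
    ((List.range' (a + 1) (b - a)).map e).count u = #{c ∈ Ioc a b | e c = u} := by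
  rw [List.count, List.countP_map, List.countP_eq_length_filter]
  rfl

lemma List.IsSuffix.exists_of_flatMap {α β : Type*} {f : α → List β} :
    ∀ {l : List α} {s : List β}, s <:+ l.flatMap f →
      s = [] ∨ ∃ x l' t, x :: l' <:+ l ∧ t <:+ f x ∧ s = t ++ l'.flatMap f
  | [], s, h => Or.inl (List.eq_nil_of_suffix_nil h)
  | x :: l, s, h => by
    obtain ⟨p, hp⟩ := h
    rw [List.flatMap_cons] at hp
    rcases List.append_eq_append_iff.1 hp with ⟨p', hfx, hs⟩ | ⟨p', -, hrest⟩
    · exact Or.inr ⟨x, l, p', List.suffix_refl _, ⟨p, hfx.symm⟩, hs⟩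
    · rcases List.IsSuffix.exists_of_flatMap ⟨p', hrest.symm⟩ with hs | ⟨y, l', t, hyl, ht, hs⟩
      · exact Or.inl hs
      · exact Or.inr ⟨y, l', t, hyl.trans (List.suffix_cons x l), ht, hs⟩

lemma count_flatMap_of_cons_suffix_finRange_reverse {n : ℕ} {R : Fin n → List ℕ} {x : Fin n}
    {l : List (Fin n)} (h : x :: l <:+ (List.finRange n).reverse) (u : ℕ) :
    (l.flatMap R).count u = ∑ i ∈ Iio x, (R i).count u := by
  have hdec : (List.finRange n).reverse.Pairwise (· > ·) :=
    List.pairwise_reverse.2 (List.pairwise_lt_finRange n)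
  obtain ⟨p, hp⟩ := h
  rw [← hp, List.pairwise_append, List.pairwise_cons] at hdec
  obtain ⟨-, ⟨hxl, hl⟩, hpx⟩ := hdec
  have hIio : l.toFinset = Iio x := by
    ext y
    simp only [List.mem_toFinset, mem_Iio]
    refine ⟨hxl y, fun hyx => ?_⟩
    have hy : y ∈ p ++ x :: l := hp ▸ List.mem_reverse.2 (List.mem_finRange y)
    rcases List.mem_append.1 hy with hyp | hyxl
    · exact absurd (hpx y hyp x List.mem_cons_self) (lt_asymm hyx)
    · exact (List.mem_cons.1 hyxl).resolve_left hyx.ne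
  rw [List.count_flatMap, ← hIio, List.sum_toFinset _ (hl.imp ne_of_gt)]
  rfl

lemma List.Pairwise.exists_suffix_count {w : List ℕ} (hw : w.Pairwise (· ≤ ·)) (v : ℕ) :
    ∃ t, t <:+ w ∧ ∀ u, t.count u = if u ≤ v then 0 else w.count u := by
  refine ⟨w.dropWhile (· ≤ v), List.dropWhile_suffix _, fun u => ?_⟩
  have hgt : ∀ y ∈ w.dropWhile (· ≤ v), v < y := by
    intro y hy
    have hne : w.dropWhile (· ≤ v) ≠ [] := List.ne_nil_of_mem hy
    have hhead := List.head_dropWhile_not (· ≤ v) hne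
    have hsorted := hw.sublist (List.dropWhile_suffix (· ≤ v)).sublist
    rw [← List.cons_head_tail hne, List.pairwise_cons] at hsorted
    simp only [decide_eq_false_iff_not, not_le] at hhead
    rw [← List.cons_head_tail hne, List.mem_cons] at hy
    rcases hy with rfl | hy
    · exact hhead
    · exact hhead.trans_le (hsorted.1 y hy)
  split_ifs with huv
  · exact List.count_eq_zero.2 fun hu => absurd (hgt u hu) (not_lt.2 huv)
  · have htake : (w.takeWhile (· ≤ v)).count u = 0 :=
      List.count_eq_zero.2 fun hu => huv (by simpa using List.mem_takeWhile_imp hu)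
    conv_rhs => rw [← List.takeWhile_append_dropWhile (p := (· ≤ v)) (l := w)]
    rw [List.count_append, htake, zero_add]

lemma isReverseLatticeWord_flatMap_finRange_reverse_iff {n : ℕ} (R : Fin n → List ℕ) :
    IsReverseLatticeWord ((List.finRange n).reverse.flatMap R) ↔
      ∀ i (t : List ℕ), t <:+ R i → ∀ j, 1 ≤ j →
        t.count (j + 1) + ∑ i' ∈ Iio i, (R i').count (j + 1)
          ≤ t.count j + ∑ i' ∈ Iio i, (R i').count j := by
  constructor
  · intro hlat i t ht j hj
    obtain ⟨p, l, hpl⟩ := List.append_of_mem (List.mem_reverse.2 (List.mem_finRange i))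
    have hsuf : t ++ l.flatMap R <:+ (List.finRange n).reverse.flatMap R := by
      obtain ⟨q, hq⟩ := ht
      exact ⟨p.flatMap R ++ q, by simp [hpl, ← hq]⟩
    have := hlat _ hsuf j hj
    rwa [List.count_append, List.count_append,
      count_flatMap_of_cons_suffix_finRange_reverse ⟨p, hpl.symm⟩,
      count_flatMap_of_cons_suffix_finRange_reverse ⟨p, hpl.symm⟩] at this
  · intro h s hs j hj
    rcases hs.exists_of_flatMap with rfl | ⟨x, l, t, hxl, ht, rfl⟩
    · simp
    · rw [List.count_append, List.count_append,
        count_flatMap_of_cons_suffix_finRange_reverse hxl,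
        count_flatMap_of_cons_suffix_finRange_reverse hxl]
      exact h x t ht j hj

section LRSystem

variable {n : ℕ} {α β γ : Fin n → ℕ} {r : Fin n → Fin n → ℕ}

lemma isNatLRSolution_iff : IsNatLRSolution n α β γ r ↔
    (∀ i, α i + ∑ j, r i j = γ i) ∧ (∀ j, ∑ i, r i j = β j) ∧
    (∀ (i : Fin n) (h : i.1 + 1 < n) (j : Fin n),
      α ⟨i.1 + 1, h⟩ + prefixSum (r ⟨i.1 + 1, h⟩) (j + 1) ≤ α i + prefixSum (r i) j) ∧
    (∀ i j : Fin n, i < j → r i j = 0) ∧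
    (∀ i j : Fin n, 0 < j.1 →
      ∑ i' ∈ Iic i, r i' j ≤ ∑ i' ∈ Iio i, r i' ⟨j.1 - 1, by omega⟩) := by
  simp only [IsNatLRSolution, IsRatLRSolution, prefixSum_val, prefixSum_val_succ]
  norm_cast
  simp

lemma eq_zero_of_lt_of_lattice
    (h : ∀ i j : Fin n, 0 < j.1 →
      ∑ i' ∈ Iic i, r i' j ≤ ∑ i' ∈ Iio i, r i' ⟨j.1 - 1, by omega⟩)
    {i j : Fin n} (hij : i < j) : r i j = 0 := by
  suffices ∀ i j : Fin n, i < j → ∑ i' ∈ Iic i, r i' j = 0 from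
    sum_eq_zero_iff.1 (this i j hij) i (mem_Iic.2 le_rfl)
  intro i
  induction i using WellFoundedLT.induction with
  | _ i ih =>
  intro j hij
  refine Nat.eq_zero_of_le_zero ((h i j (by omega)).trans (sum_eq_zero fun i' hi' => ?_).le)
  have hi'j : i' < ⟨j.1 - 1, by omega⟩ := by
    rw [mem_Iio] at hi'; rw [Fin.lt_def] at hi' hij ⊢; simp only; omega
  exact sum_eq_zero_iff.1 (ih i' (mem_Iio.1 hi') _ hi'j) i' (mem_Iic.2 le_rfl)

end LRSystem

def rowCount {n : ℕ} (α γ : Fin n → ℕ) (e : Fin n → ℕ → ℕ) (i j : Fin n) : ℕ :=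
  #{c ∈ Ioc (α i) (γ i) | e i c = j.1 + 1}

def rowWord {n : ℕ} (α γ : Fin n → ℕ) (e : Fin n → ℕ → ℕ) (i : Fin n) : List ℕ :=
  (List.range' (α i + 1) (γ i - α i)).map (e i)

structure IsRowFilling (n : ℕ) (α γ : Fin n → ℕ) (e : Fin n → ℕ → ℕ) : Prop where
  monotoneOn : ∀ i, MonotoneOn (e i) (Set.Ioc (α i) (γ i))
  apply_mem_Icc : ∀ i, ∀ c ∈ Ioc (α i) (γ i), e i c ∈ Icc 1 n

section RowWord

variable {n : ℕ} {α γ : Fin n → ℕ} {e : Fin n → ℕ → ℕ}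

lemma count_rowWord (i : Fin n) (u : ℕ) :
    (rowWord α γ e i).count u = #{c ∈ Ioc (α i) (γ i) | e i c = u} :=
  List.count_map_range' _ _ _ _

lemma count_rowWord_val_succ (i j : Fin n) :
    (rowWord α γ e i).count (j.1 + 1) = rowCount α γ e i j :=
  count_rowWord i _

lemma count_rowWord_val (i j : Fin n) (hj : 0 < j.1) :
    (rowWord α γ e i).count j.1 = rowCount α γ e i ⟨j.1 - 1, by omega⟩ := by
  simp only [count_rowWord, rowCount, Nat.sub_add_cancel hj]

end RowWord

namespace IsRowFilling

variable {n : ℕ} {α γ : Fin n → ℕ} {e : Fin n → ℕ → ℕ}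

lemma card_filter_le (he : IsRowFilling n α γ e) (i : Fin n) (v : ℕ) :
    #{c ∈ Ioc (α i) (γ i) | e i c ≤ v} = prefixSum (rowCount α γ e i) v :=
  card_filter_le_eq_prefixSum (he.apply_mem_Icc i) v

lemma apply_le_iff (he : IsRowFilling n α γ e) {i : Fin n} {c : ℕ} (hc : c ∈ Ioc (α i) (γ i))
    (v : ℕ) : e i c ≤ v ↔ c ≤ α i + prefixSum (rowCount α γ e i) v := by
  rw [← he.card_filter_le]
  exact (he.monotoneOn i).apply_le_iff_le_add_card hc v

lemma add_sum_rowCount (he : IsRowFilling n α γ e) {i : Fin n} (hi : α i ≤ γ i) :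
    α i + ∑ j, rowCount α γ e i j = γ i := by
  rw [← prefixSum_of_le _ le_rfl, ← he.card_filter_le,
    filter_true_of_mem fun c hc => (Finset.mem_Icc.1 (he.apply_mem_Icc i c hc)).2, Nat.card_Ioc]
  omega

lemma apply_eq_of_rowCount_eq {e' : Fin n → ℕ → ℕ} (he : IsRowFilling n α γ e)
    (he' : IsRowFilling n α γ e') (h : rowCount α γ e = rowCount α γ e') {i : Fin n} {c : ℕ}
    (hc : c ∈ Ioc (α i) (γ i)) : e i c = e' i c :=
  eq_of_forall_ge_iff fun v => by rw [he.apply_le_iff hc, he'.apply_le_iff hc, h]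

lemma count_rowWord_eq_zero (he : IsRowFilling n α γ e) (i : Fin n) {u : ℕ} (hu : n < u) :
    (rowWord α γ e i).count u = 0 := by
  rw [count_rowWord, card_eq_zero, filter_eq_empty_iff]
  intro c hc hcu
  have := Finset.mem_Icc.1 (he.apply_mem_Icc i c hc)
  omega

lemma pairwise_rowWord (he : IsRowFilling n α γ e) (i : Fin n) :
    (rowWord α γ e i).Pairwise (· ≤ ·) := by
  refine List.pairwise_map.2 ((List.pairwise_lt_range' 1).imp_of_mem fun ha hb hab => ?_)
  rw [List.mem_range'_1] at ha hb
  exact he.monotoneOn i ⟨by omega, by omega⟩ ⟨by omega, by omega⟩ hab.le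

lemma prefixSum_le_of_colStrict (he : IsRowFilling n α γ e)
    (hα : IsPartition n α) (hγ : IsPartition n γ)
    (hcol : ∀ (i : Fin n) (h : i.1 + 1 < n) (c : ℕ), α ⟨i.1 + 1, h⟩ < c → c ≤ γ ⟨i.1 + 1, h⟩ →
      α i < c → c ≤ γ i → e i c < e ⟨i.1 + 1, h⟩ c)
    (i : Fin n) (h : i.1 + 1 < n) (j : Fin n) :
    α ⟨i.1 + 1, h⟩ + prefixSum (rowCount α γ e ⟨i.1 + 1, h⟩) (j + 1)
      ≤ α i + prefixSum (rowCount α γ e i) j := by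
  set i₁ : Fin n := ⟨i.1 + 1, h⟩
  have hii₁ : i ≤ i₁ := Fin.le_def.2 (Nat.le_succ _)
  -- `c` is the last cell of row `i + 1` with entry `≤ j + 1`; the cell above it has entry `≤ j`.
  set c := α i₁ + prefixSum (rowCount α γ e i₁) (j + 1)
  rcases Nat.eq_zero_or_pos (prefixSum (rowCount α γ e i₁) (j + 1)) with hN | hN
  · have := hα i i₁ hii₁
    omega
  have hNle : prefixSum (rowCount α γ e i₁) (j + 1) ≤ γ i₁ - α i₁ := by
    rw [← he.card_filter_le, ← Nat.card_Ioc]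
    exact Finset.card_filter_le _ _
  have hc : c ∈ Ioc (α i₁) (γ i₁) := mem_Ioc.2 ⟨by omega, by omega⟩
  by_cases hcα : c ≤ α i
  · omega
  have hc' : c ∈ Ioc (α i) (γ i) := mem_Ioc.2 ⟨by omega, (mem_Ioc.1 hc).2.trans (hγ i i₁ hii₁)⟩
  have hlt : e i c < e i₁ c :=
    hcol i h c (mem_Ioc.1 hc).1 (mem_Ioc.1 hc).2 (mem_Ioc.1 hc').1 (mem_Ioc.1 hc').2
  have hle := (he.apply_le_iff hc (j + 1)).2 le_rfl
  have := (he.apply_le_iff hc' j).1 (by omega)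
  omega

lemma colStrict_of_prefixSum_le (he : IsRowFilling n α γ e)
    (hineq : ∀ (i : Fin n) (h : i.1 + 1 < n) (j : Fin n),
      α ⟨i.1 + 1, h⟩ + prefixSum (rowCount α γ e ⟨i.1 + 1, h⟩) (j + 1)
        ≤ α i + prefixSum (rowCount α γ e i) j)
    (i : Fin n) (h : i.1 + 1 < n) (c : ℕ) (hc₁ : α ⟨i.1 + 1, h⟩ < c) (hc₂ : c ≤ γ ⟨i.1 + 1, h⟩)
    (hc₃ : α i < c) (hc₄ : c ≤ γ i) : e i c < e ⟨i.1 + 1, h⟩ c := by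
  have hc : c ∈ Ioc (α ⟨i.1 + 1, h⟩) (γ ⟨i.1 + 1, h⟩) := mem_Ioc.2 ⟨hc₁, hc₂⟩
  set v := e ⟨i.1 + 1, h⟩ c
  have hv := Finset.mem_Icc.1 (he.apply_mem_Icc _ c hc)
  have hcv := (he.apply_le_iff hc v).1 le_rfl
  have hineq' := hineq i h ⟨v - 1, by omega⟩
  have hv' : v - 1 + 1 = v := by omega
  simp only [hv'] at hineq'
  have := (he.apply_le_iff (mem_Ioc.2 ⟨hc₃, hc₄⟩) (v - 1)).2 (hcv.trans hineq')
  omega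

lemma isReverseLatticeWord_iff (he : IsRowFilling n α γ e) :
    IsReverseLatticeWord ((List.finRange n).reverse.flatMap (rowWord α γ e)) ↔
      ∀ i j : Fin n, 0 < j.1 → ∑ i' ∈ Iic i, rowCount α γ e i' j
        ≤ ∑ i' ∈ Iio i, rowCount α γ e i' ⟨j.1 - 1, by omega⟩ := by
  rw [isReverseLatticeWord_flatMap_finRange_reverse_iff]
  constructor
  · intro hlat i j hj
    obtain ⟨t, ht, htc⟩ := (he.pairwise_rowWord i).exists_suffix_count j.1
    have := hlat i t ht j.1 hj
    rw [htc, htc, if_neg (by omega), if_pos le_rfl] at this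
    simp only [count_rowWord_val_succ, count_rowWord_val _ j hj] at this
    rw [← Iio_insert, sum_insert (by simp)]
    omega
  · intro h i t ht u hu
    have htu := ht.sublist.count_le (u + 1)
    rcases lt_or_ge u n with hun | hun
    · set j : Fin n := ⟨u, hun⟩
      have hj : u = j.1 := rfl
      have := h i j (by omega)
      rw [← Iio_insert, sum_insert (by simp)] at this
      rw [hj] at htu ⊢
      simp only [count_rowWord_val_succ, count_rowWord_val _ j (by omega)] at htu ⊢
      omega
    · simp only [he.count_rowWord_eq_zero _ (Nat.lt_succ_of_le hun), sum_const_zero] at htu ⊢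
      omega

end IsRowFilling

section Tableau

variable {n : ℕ} {α β γ : Fin n → ℕ}

lemma LRSkewTableau.isRowFilling (T : LRSkewTableau n α β γ) : IsRowFilling n α γ T.entry where
  monotoneOn i _ hc _ hc' hcc' := T.row_weak i _ _ hc.1 hcc' hc'.2
  apply_mem_Icc i c hc :=
    mem_Icc.2 ⟨T.entry_pos i c (mem_Ioc.1 hc).1 (mem_Ioc.1 hc).2,
      T.entry_le i c (mem_Ioc.1 hc).1 (mem_Ioc.1 hc).2⟩

lemma LRSkewTableau.isNatLRSolution_tabToR (hα : IsPartition n α) (hγ : IsPartition n γ)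
    (T : LRSkewTableau n α β γ) : IsNatLRSolution n α β γ (tabToR T) := by
  have hlat := T.isRowFilling.isReverseLatticeWord_iff.1 T.lattice
  refine isNatLRSolution_iff.2 ⟨fun i => T.isRowFilling.add_sum_rowCount (T.sub i), T.content,
    T.isRowFilling.prefixSum_le_of_colStrict hα hγ T.col_strict,
    fun _ _ => eq_zero_of_lt_of_lattice hlat, hlat⟩

lemma LRSkewTableau.entry_injective :
    Function.Injective (LRSkewTableau.entry : LRSkewTableau n α β γ → Fin n → ℕ → ℕ) := by
  rintro ⟨⟩ ⟨⟩ h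
  subst h
  rfl

lemma tabToR_injective : Function.Injective (tabToR : LRSkewTableau n α β γ → _) := by
  intro T T' h
  refine LRSkewTableau.entry_injective (funext₂ fun i c => ?_)
  by_cases hc : c ∈ Ioc (α i) (γ i)
  · exact T.isRowFilling.apply_eq_of_rowCount_eq T'.isRowFilling h hc
  · have hc' : c ≤ α i ∨ γ i < c := by rw [mem_Ioc] at hc; omega
    rw [T.zero_outside i c hc', T'.zero_outside i c hc']

end Tableau

/-- Row `i` carries `r i j` copies of `j + 1` in increasing order: the entry of cell `c` counts
the boundaries `α i + prefixSum (r i) v`, `v < n`, lying strictly left of `c`. -/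
def fillingOfCounts {n : ℕ} (α γ : Fin n → ℕ) (r : Fin n → Fin n → ℕ) : Fin n → ℕ → ℕ :=
  fun i c => if c ∈ Ioc (α i) (γ i) then #{v ∈ range n | α i + prefixSum (r i) v < c} else 0

section Construction

variable {n : ℕ} {α β γ : Fin n → ℕ} {r : Fin n → Fin n → ℕ}

lemma fillingOfCounts_le_iff (hshape : ∀ i, α i + ∑ j, r i j = γ i) {i : Fin n} {c : ℕ}
    (hc : c ∈ Ioc (α i) (γ i)) (v : ℕ) :
    fillingOfCounts α γ r i c ≤ v ↔ c ≤ α i + prefixSum (r i) v := by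
  rw [fillingOfCounts, if_pos hc]
  refine card_filter_lt_le_iff (fun _ _ h => Nat.add_le_add_left (prefixSum_mono _ h) _) ?_ v
  rw [prefixSum_of_le _ le_rfl, hshape]
  exact (mem_Ioc.1 hc).2

lemma isRowFilling_fillingOfCounts (hshape : ∀ i, α i + ∑ j, r i j = γ i) :
    IsRowFilling n α γ (fillingOfCounts α γ r) where
  monotoneOn i c hc c' hc' hcc' :=
    (fillingOfCounts_le_iff hshape (by simpa using hc) _).2
      (hcc'.trans ((fillingOfCounts_le_iff hshape (by simpa using hc') _).1 le_rfl))
  apply_mem_Icc i c hc := by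
    have hpos := (fillingOfCounts_le_iff hshape hc 0).not.2
      (by rw [prefixSum_zero]; have := (mem_Ioc.1 hc).1; omega)
    have hle := (fillingOfCounts_le_iff hshape hc n).2
      (by rw [prefixSum_of_le _ le_rfl, hshape]; exact (mem_Ioc.1 hc).2)
    exact mem_Icc.2 ⟨by omega, hle⟩

lemma rowCount_fillingOfCounts (hshape : ∀ i, α i + ∑ j, r i j = γ i) :
    rowCount α γ (fillingOfCounts α γ r) = r := by
  have hprefix : ∀ i, ∀ v ≤ n,
      prefixSum (rowCount α γ (fillingOfCounts α γ r) i) v = prefixSum (r i) v := by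
    intro i v hv
    have hPv : prefixSum (r i) v ≤ prefixSum (r i) n := prefixSum_mono _ hv
    have hrow := hshape i
    rw [← prefixSum_of_le _ le_rfl] at hrow
    rw [← (isRowFilling_fillingOfCounts hshape).card_filter_le,
      filter_congr fun c hc => fillingOfCounts_le_iff hshape hc v]
    have : {c ∈ Ioc (α i) (γ i) | c ≤ α i + prefixSum (r i) v}
        = Ioc (α i) (α i + prefixSum (r i) v) := by
      ext c
      simp only [mem_filter, mem_Ioc]
      omega
    rw [this, Nat.card_Ioc]
    omega
  funext i j
  have hsucc := hprefix i (j + 1) j.2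
  rw [prefixSum_val_succ_eq_add, prefixSum_val_succ_eq_add, hprefix i j j.2.le] at hsucc
  omega

lemma exists_tabToR_eq (hr : IsNatLRSolution n α β γ r) :
    ∃ T : LRSkewTableau n α β γ, tabToR T = r := by
  obtain ⟨hshape, hcontent, hineq, -, hlat⟩ := isNatLRSolution_iff.1 hr
  have hf := isRowFilling_fillingOfCounts hshape
  have hcount := rowCount_fillingOfCounts hshape
  refine ⟨{
    sub := fun i => by have := hshape i; omega
    entry := fillingOfCounts α γ r
    entry_pos := fun i c h₁ h₂ => (mem_Icc.1 (hf.apply_mem_Icc i c (mem_Ioc.2 ⟨h₁, h₂⟩))).1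
    entry_le := fun i c h₁ h₂ => (mem_Icc.1 (hf.apply_mem_Icc i c (mem_Ioc.2 ⟨h₁, h₂⟩))).2
    zero_outside := fun i c h => if_neg (by rw [mem_Ioc]; omega)
    row_weak := fun i c c' h₁ hcc' h₂ =>
      hf.monotoneOn i ⟨h₁, hcc'.trans h₂⟩ ⟨h₁.trans_le hcc', h₂⟩ hcc'
    col_strict := hf.colStrict_of_prefixSum_le (by rwa [hcount])
    content := fun j => (sum_congr rfl fun i _ => congr_fun₂ hcount i j).trans (hcontent j)
    lattice := hf.isReverseLatticeWord_iff.2 (by rwa [hcount]) }, hcount⟩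

end Construction

theorem lr_tableaux_biject_with_integer_solutions_general
    (n : ℕ) (α β γ : Fin n → ℕ)
    (hα : IsPartition n α) (hγ : IsPartition n γ) :
    Set.BijOn (tabToR (n := n) (α := α) (β := β) (γ := γ)) Set.univ
      {r : Fin n → Fin n → ℕ | IsNatLRSolution n α β γ r} ∧
    Nat.card (LRSkewTableau n α β γ)
      = Set.ncard {r : Fin n → Fin n → ℕ | IsNatLRSolution n α β γ r} := by
  have hbij : Set.BijOn tabToR Set.univ {r | IsNatLRSolution n α β γ r} :=
    ⟨fun T _ => T.isNatLRSolution_tabToR hα hγ, tabToR_injective.injOn,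
      fun r hr => (exists_tabToR_eq hr).imp fun T hT => ⟨Set.mem_univ T, hT⟩⟩
  refine ⟨hbij, ?_⟩
  rw [← Set.ncard_univ, ← hbij.image_eq, Set.ncard_image_of_injective _ tabToR_injective]

/-- The map `T ↦ r`, where `r i j` is the number of entries equal
to `j+1` in row `i+1` of `T`, is a bijection from the set of Littlewood–Richardson
skew tableaux of shape `γ/α` and content `β` (entries in `{1,…,n}`) onto the set of
nonnegative integer solutions of the LR system for `(α,β,γ)`.  In particular the
Littlewood–Richardson coefficient, the number of such tableaux, equals the number
of nonnegative integer solutions of the LR system. -/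
theorem lr_tableaux_biject_with_integer_solutions
    (n : ℕ) (hn : 0 < n) (α β γ : Fin n → ℕ)
    (hα : IsPartition n α) (hβ : IsPartition n β) (hγ : IsPartition n γ) :
    Set.BijOn (tabToR (n := n) (α := α) (β := β) (γ := γ)) Set.univ
      {r : Fin n → Fin n → ℕ | IsNatLRSolution n α β γ r} ∧
    Nat.card (LRSkewTableau n α β γ)
      = Set.ncard {r : Fin n → Fin n → ℕ | IsNatLRSolution n α β γ r} :=
  lr_tableaux_biject_with_integer_solutions_general n α β γ hα hγ
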